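/- (Hilbert 90 for GL_n) Let E/F be a finite Galois extension with cyclic Galois group generated by σ of order 2. If A ∈ GL(n, E) satisfies A·σ(A) = 1 (σ acting entrywise), then there exists B ∈ GL(n, E) with A = B·σ(B)⁻¹. -/

import Mathlib

/-!
Since `finrank F E = 2`, the group `Aut(E/F)` has at most two elements, so `σ² = 1`.
Then `T v = A σ(v)` is a `σ`-semilinear involution of `Eⁿ`, and for every `c ∈ E` the vector
`c v + σ(c) T v` is `T`-fixed. Choosing `e` with `σ e ≠ e`, `v` is an `E`-combination of two
such vectors, so the `T`-fixed vectors span `Eⁿ`, and any `n` of them forming a basis are the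
columns of an invertible `B` with `A σ(B) = B`.
-/

open Module Matrix

theorem AlgEquiv.mul_self_eq_one_of_finrank_eq_two {F E : Type*} [Field F] [Field E]
    [Algebra F E] (hdeg : finrank F E = 2) (σ : E ≃ₐ[F] E) : σ * σ = 1 := by
  have : FiniteDimensional F E := Module.finite_of_finrank_eq_succ hdeg
  have hcard : Fintype.card (E ≃ₐ[F] E) ≤ 2 := hdeg ▸ AlgEquiv.card_le
  have hpos : 0 < Fintype.card (E ≃ₐ[F] E) := Fintype.card_pos
  have hpow := pow_card_eq_one (x := σ)
  interval_cases Fintype.card (E ≃ₐ[F] E)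
  · rw [pow_one] at hpow
    rw [hpow, one_mul]
  · rwa [pow_two] at hpow

theorem RingHom.comp_mulVec {ι R S : Type*} [Fintype ι] [NonAssocSemiring R] [NonAssocSemiring S]
    (f : R →+* S) (M : Matrix ι ι R) (v : ι → R) : f ∘ (M *ᵥ v) = M.map f *ᵥ (f ∘ v) :=
  funext (f.map_mulVec M v)

namespace Matrix

theorem exists_isUnit_forall_col_mem {K ι : Type*} [Field K] [Fintype ι] [DecidableEq ι]
    {s : Set (ι → K)} (hs : Submodule.span K s = ⊤) :
    ∃ B : Matrix ι ι K, IsUnit B ∧ ∀ j, B.col j ∈ s := by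
  let b := Basis.ofSpan hs.ge
  let b' := b.reindex (b.indexEquiv (Pi.basisFun K ι))
  refine ⟨of fun i j => b' j i, linearIndependent_cols_iff_isUnit.mp b'.linearIndependent,
    fun j => ?_⟩
  exact Basis.ofSpan_subset hs.ge ⟨_, (b.reindex_apply _ j).symm⟩

section Involution

variable {ι E : Type*} [Fintype ι] [Field E] {σ : E →+* E} {M : Matrix ι ι E}

theorem mulVec_comp_mulVec_comp [DecidableEq ι] (hσ : Function.Involutive σ)
    (hM : M * M.map σ = 1) (v : ι → E) : M *ᵥ (σ ∘ (M *ᵥ (σ ∘ v))) = v := by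
  rw [σ.comp_mulVec, mulVec_mulVec, hM, one_mulVec, ← Function.comp_assoc,
    hσ.comp_self, Function.id_comp]

theorem mulVec_comp_trace [DecidableEq ι] (hσ : Function.Involutive σ) (hM : M * M.map σ = 1)
    (c : E) (v : ι → E) :
    M *ᵥ (σ ∘ (c • v + σ c • (M *ᵥ (σ ∘ v)))) = c • v + σ c • (M *ᵥ (σ ∘ v)) := by
  have hsmul : ∀ (a : E) (w : ι → E), σ ∘ (a • w) = σ a • (σ ∘ w) := fun a w =>
    funext fun i => map_mul σ a (w i)
  have hadd : ∀ w w' : ι → E, σ ∘ (w + w') = σ ∘ w + σ ∘ w' := fun w w' =>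
    funext fun i => map_add σ (w i) (w' i)
  rw [hadd, hsmul, hsmul, mulVec_add, mulVec_smul, mulVec_smul,
    mulVec_comp_mulVec_comp hσ hM, hσ c, add_comm]

theorem span_setOf_mulVec_comp_eq_self [DecidableEq ι] (hσ : Function.Involutive σ)
    (hσ' : σ ≠ RingHom.id E) (hM : M * M.map σ = 1) :
    Submodule.span E {v : ι → E | M *ᵥ (σ ∘ v) = v} = ⊤ := by
  obtain ⟨e, he⟩ : ∃ e, σ e ≠ e := by
    by_contra! h
    exact hσ' (RingHom.ext h)
  refine eq_top_iff.mpr fun v _ => ?_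
  have mem (c : E) :
      c • v + σ c • (M *ᵥ (σ ∘ v)) ∈ Submodule.span E {v | M *ᵥ (σ ∘ v) = v} :=
    Submodule.subset_span (mulVec_comp_trace hσ hM c v)
  have hv : v = (σ e - e)⁻¹ • (σ e • ((1 : E) • v + σ 1 • (M *ᵥ (σ ∘ v)))
      - (e • v + σ e • (M *ᵥ (σ ∘ v)))) := by
    rw [map_one, one_smul, one_smul, smul_add, ← sub_sub, add_sub_right_comm,
      add_sub_cancel_right, ← sub_smul, smul_smul, inv_mul_cancel₀ (sub_ne_zero.mpr he),
      one_smul]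
  rw [hv]
  exact Submodule.smul_mem _ _ (Submodule.sub_mem _ (Submodule.smul_mem _ _ (mem 1)) (mem e))

theorem mul_map_eq_self_of_forall_col {B : Matrix ι ι E}
    (h : ∀ j, M *ᵥ (σ ∘ B.col j) = B.col j) : M * B.map σ = B := by
  ext i j
  simpa [mul_apply, mulVec, dotProduct] using congrFun (h j) i

theorem exists_isUnit_mul_map_eq [DecidableEq ι] (hσ : Function.Involutive σ)
    (hσ' : σ ≠ RingHom.id E) (hM : M * M.map σ = 1) :
    ∃ B : Matrix ι ι E, IsUnit B ∧ M * B.map σ = B := by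
  obtain ⟨B, hB, hcol⟩ := exists_isUnit_forall_col_mem (span_setOf_mulVec_comp_eq_self hσ hσ' hM)
  exact ⟨B, hB, mul_map_eq_self_of_forall_col hcol⟩

end Involution

end Matrix

theorem stmt_10_general {F E : Type*} [Field F] [Field E] [Algebra F E]
    (hdeg : Module.finrank F E = 2) (σ : E ≃ₐ[F] E) (hσ : σ ≠ AlgEquiv.refl)
    (n : ℕ) (A : GL (Fin n) E)
    (hA : A * Units.map (RingHom.mapMatrix (σ : E →+* E)).toMonoidHom A = 1) :
    ∃ B : GL (Fin n) E,
      A = B * (Units.map (RingHom.mapMatrix (σ : E →+* E)).toMonoidHom B)⁻¹ := by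
  have hinv : Function.Involutive (σ : E →+* E) := fun x => by
    simpa using DFunLike.congr_fun (σ.mul_self_eq_one_of_finrank_eq_two hdeg) x
  have hne : (σ : E →+* E) ≠ RingHom.id E := fun h =>
    hσ (AlgEquiv.ext fun x => DFunLike.congr_fun h x)
  have hM : (A : Matrix (Fin n) (Fin n) E) * (A : Matrix (Fin n) (Fin n) E).map σ = 1 := by
    simpa using congrArg Units.val hA
  obtain ⟨B, hB, hAB⟩ := exists_isUnit_mul_map_eq hinv hne hM
  refine ⟨hB.unit, eq_mul_inv_iff_mul_eq.mpr (Units.ext ?_)⟩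
  simpa using hAB

/-- Hilbert 90 for `GL_n`: if `E/F` is a quadratic Galois extension with
nontrivial automorphism `σ` and `A ∈ GL(n, E)` satisfies `A·σ(A) = 1`, then
`A = B·σ(B)⁻¹` for some `B ∈ GL(n, E)`. -/
theorem stmt_10 {F E : Type*} [Field F] [Field E] [Algebra F E] [IsGalois F E]
    (hdeg : Module.finrank F E = 2) (σ : E ≃ₐ[F] E) (hσ : σ ≠ AlgEquiv.refl)
    (n : ℕ) (A : GL (Fin n) E)
    (hA : A * Units.map (RingHom.mapMatrix (σ : E →+* E)).toMonoidHom A = 1) :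
    ∃ B : GL (Fin n) E,
      A = B * (Units.map (RingHom.mapMatrix (σ : E →+* E)).toMonoidHom B)⁻¹ :=
  stmt_10_general hdeg σ hσ n A hA
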